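/- Let A = (A, ≼, →, S) be an arrow algebra, with logical preorder a ⊢ b iff a → b ∈ S. Then a + b := ⨅_{c ∈ A} (a → ∂c) → ((b → ∂c) → ∂c) is a binary join with respect to ⊢: a ⊢ a + b, b ⊢ a + b, and whenever a ⊢ c and b ⊢ c then a + b ⊢ c. -/
import Mathlib


/-- The combinator 𝐤 := ⨅ a b, a → (b → a). -/
def kC {A : Type*} [CompleteLattice A] (arr : A → A → A) : A :=
  ⨅ (a : A) (b : A), arr a (arr b a)

/-- The combinator 𝐬 := ⨅ a b c, (a → (b → c)) → ((a → b) → (a → c)). -/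
def sC {A : Type*} [CompleteLattice A] (arr : A → A → A) : A :=
  ⨅ (a : A) (b : A) (c : A),
    arr (arr a (arr b c)) (arr (arr a b) (arr a c))

/-- The combinator 𝐚 := ⨅_{x, B ⊆ Im(→)} (⨅_{b ∈ B} x → b) → (x → ⨅ B). -/
def aC {A : Type*} [CompleteLattice A] (arr : A → A → A) : A :=
  ⨅ (x : A) (B : Set A) (_ : B ⊆ Set.range fun p : A × A => arr p.1 p.2),
    arr (⨅ b ∈ B, arr x b) (arr x (sInf B))

/-- An arrow structure on a complete lattice: the implication is antitone in its
first argument and monotone in its second. -/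
structure IsArrow {A : Type*} [CompleteLattice A] (arr : A → A → A) : Prop where
  mono : ∀ {a a' b b' : A}, a' ≤ a → b ≤ b' → arr a b ≤ arr a' b'

/-- A separator on an arrow structure. -/
structure IsSeparator {A : Type*} [CompleteLattice A] (arr : A → A → A) (S : Set A) : Prop where
  up : ∀ {a b : A}, a ∈ S → a ≤ b → b ∈ S
  mp : ∀ {a b : A}, arr a b ∈ S → a ∈ S → b ∈ S
  kmem : kC arr ∈ S
  smem : sC arr ∈ S
  amem : aC arr ∈ S

/-- Application in an arrow structure: `a·b := ⨅ { c → d | a ≼ b → (c → d) }`. -/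
def appA {A : Type*} [CompleteLattice A] (arr : A → A → A) (a b : A) : A :=
  sInf {e | ∃ c d : A, e = arr c d ∧ a ≤ arr b (arr c d)}

/-- `∂a := ⊤ → a`. -/
def pd {A : Type*} [CompleteLattice A] (arr : A → A → A) (a : A) : A := arr ⊤ a

/-- Abstraction in an arrow structure: `λf := ⨅ x, x → ∂(f x)`. -/
def lamA {A : Type*} [CompleteLattice A] (arr : A → A → A) (f : A → A) : A :=
  ⨅ x : A, arr x (pd arr (f x))

/-- The logical preorder: `a ⊢ b` iff `a → b ∈ S`. -/
def entails {A : Type*} [CompleteLattice A] (arr : A → A → A) (S : Set A) (a b : A) : Prop :=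
  arr a b ∈ S

/-- The logical conjunction: `a × b := ⨅ z, z → ∂(z·(∂a)·(∂b))`. -/
def meetA {A : Type*} [CompleteLattice A] (arr : A → A → A) (a b : A) : A :=
  ⨅ z : A, arr z (pd arr (appA arr (appA arr z (pd arr a)) (pd arr b)))

/-- The logical disjunction: `a + b := ⨅ c, (a → ∂c) → ((b → ∂c) → ∂c)`. -/
def joinA {A : Type*} [CompleteLattice A] (arr : A → A → A) (a b : A) : A :=
  ⨅ c : A, arr (arr a (pd arr c)) (arr (arr b (pd arr c)) (pd arr c))


section Aux
variable {A : Type*} [CompleteLattice A] {arr : A → A → A} {S : Set A}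

theorem kC_le (a b : A) : kC arr ≤ arr a (arr b a) :=
  iInf_le_of_le a (iInf_le _ b)

theorem sC_le (a b c : A) :
    sC arr ≤ arr (arr a (arr b c)) (arr (arr a b) (arr a c)) :=
  iInf_le_of_le a (iInf_le_of_le b (iInf_le _ c))

theorem refl_mem (hA : IsArrow arr) (hS : IsSeparator arr S) (a : A) : arr a a ∈ S := by
  have h1 : arr (arr a (arr (arr a a) a)) (arr (arr a (arr a a)) (arr a a)) ∈ S :=
    hS.up hS.smem (sC_le a (arr a a) a)
  have h2 : arr a (arr (arr a a) a) ∈ S := hS.up hS.kmem (kC_le a (arr a a))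
  have h3 : arr a (arr a a) ∈ S := hS.up hS.kmem (kC_le a a)
  exact hS.mp (hS.mp h1 h2) h3

/-- weakening: if `p ∈ S` then `x → p ∈ S`. -/
theorem Dw (hS : IsSeparator arr S) {p : A} (hp : p ∈ S) (x : A) : arr x p ∈ S :=
  hS.mp (hS.up hS.kmem (kC_le p x)) hp

/-- modus ponens in context. -/
theorem Dmp (hS : IsSeparator arr S) {x p q : A}
    (h1 : arr x (arr p q) ∈ S) (h2 : arr x p ∈ S) : arr x q ∈ S :=
  hS.mp (hS.mp (hS.up hS.smem (sC_le x p q)) h1) h2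

theorem Dtrans (hS : IsSeparator arr S) {a b c : A}
    (h1 : arr a b ∈ S) (h2 : arr b c ∈ S) : arr a c ∈ S :=
  Dmp hS (Dw hS h2 a) h1

theorem app_le {u v c d : A} (h : u ≤ arr v (arr c d)) : appA arr u v ≤ arr c d :=
  sInf_le ⟨c, d, rfl, h⟩

theorem app_mem (hA : IsArrow arr) (hS : IsSeparator arr S) {u v : A}
    (hu : u ∈ S) (hv : v ∈ S) : appA arr u v ∈ S := by
  set B : Set A := {e | ∃ c d : A, e = arr c d ∧ u ≤ arr v (arr c d)} with hB
  have hBr : B ⊆ Set.range fun p : A × A => arr p.1 p.2 := by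
    rintro e ⟨c, d, rfl, -⟩; exact ⟨(c, d), rfl⟩
  have h1 : u ≤ ⨅ e ∈ B, arr v e := by
    refine le_iInf₂ fun e he => ?_
    obtain ⟨c, d, rfl, h⟩ := he
    exact h
  have h2 : (⨅ e ∈ B, arr v e) ∈ S := hS.up hu h1
  have h3 : arr (⨅ e ∈ B, arr v e) (arr v (sInf B)) ∈ S := by
    refine hS.up hS.amem ?_
    exact iInf_le_of_le v (iInf_le_of_le B (iInf_le _ hBr))
  exact hS.mp (hS.mp h3 h2) hv

/-- `K u ≤ y → z` when `u ≤ z`. -/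
theorem KK (hA : IsArrow arr) {u z : A} (h : u ≤ z) (y : A) :
    appA arr (kC arr) u ≤ arr y z :=
  app_le (le_trans (kC_le u y) (hA.mono le_rfl (hA.mono le_rfl h)))

/-- `S u ≤ (x→y) → (x→z)` when `u ≤ x → (y → z)`. -/
theorem S1 (hA : IsArrow arr) {u x y z : A} (h : u ≤ arr x (arr y z)) :
    appA arr (sC arr) u ≤ arr (arr x y) (arr x z) :=
  app_le (le_trans (sC_le x y z) (hA.mono h le_rfl))

/-- `S u v ≤ x → z` when `u ≤ x → (y → z)` and `v ≤ x → y`. -/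
theorem SS (hA : IsArrow arr) {u v x y z : A}
    (hu : u ≤ arr x (arr y z)) (hv : v ≤ arr x y) :
    appA arr (appA arr (sC arr) u) v ≤ arr x z :=
  app_le (le_trans (S1 hA hu) (hA.mono hv le_rfl))

/-- internalized infinite conjunction via the 𝐚 combinator. -/
theorem Ainf (hS : IsSeparator arr S) {x : A} (F : A → A)
    (hF : ∀ c, ∃ p q, F c = arr p q)
    (h : (⨅ c, arr x (F c)) ∈ S) : arr x (⨅ c, F c) ∈ S := by
  have hBr : Set.range F ⊆ Set.range fun p : A × A => arr p.1 p.2 := by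
    rintro e ⟨c, rfl⟩
    obtain ⟨p, q, hpq⟩ := hF c
    exact ⟨(p, q), hpq.symm⟩
  have h3 : arr (⨅ e ∈ Set.range F, arr x e) (arr x (sInf (Set.range F))) ∈ S :=
    hS.up hS.amem (iInf_le_of_le x (iInf_le_of_le (Set.range F) (iInf_le _ hBr)))
  rw [iInf_range, sInf_range] at h3
  exact hS.mp h3 h

/-- the identity combinator. -/
theorem I_le (hA : IsArrow arr) (x : A) :
    appA arr (appA arr (sC arr) (kC arr)) (kC arr) ≤ arr x x :=
  SS hA (kC_le x (arr x x)) (kC_le x x)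

end Aux

/-- Proposition 5.1 (part): `+` is a binary join for the logical preorder. -/
theorem stmt16 {A : Type*} [CompleteLattice A] {arr : A → A → A} {S : Set A}
    (hA : IsArrow arr) (hS : IsSeparator arr S) :
    (∀ a b : A, entails arr S a (joinA arr a b)) ∧
    (∀ a b : A, entails arr S b (joinA arr a b)) ∧
    (∀ a b c : A, entails arr S a c → entails arr S b c →
      entails arr S (joinA arr a b) c) := by
  -- the identity combinator I = S K K
  set I : A := appA arr (appA arr (sC arr) (kC arr)) (kC arr) with hI
  -- t2 = S (K (S I)) K, with t2 ≤ x → ((x → R) → R)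
  set t2 : A := appA arr (appA arr (sC arr) (appA arr (kC arr) (appA arr (sC arr) I)))
      (kC arr) with ht2def
  -- t = S (K (S (K K))) t2, with t ≤ x → ((x → R) → (Q → R))
  set t : A := appA arr
      (appA arr (sC arr) (appA arr (kC arr) (appA arr (sC arr) (appA arr (kC arr) (kC arr)))))
      t2 with htdef
  -- t' = S (K K) t2, with t' ≤ x → (P → ((x → R) → R))
  set t' : A := appA arr (appA arr (sC arr) (appA arr (kC arr) (kC arr))) t2 with ht'def
  have ht2 : ∀ x R : A, t2 ≤ arr x (arr (arr x R) R) := by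
    intro x R
    refine SS hA (y := arr (arr x R) x) ?_ (kC_le x (arr x R))
    exact KK hA (S1 hA (I_le hA (arr x R))) x
  have ht : ∀ x R Q : A, t ≤ arr x (arr (arr x R) (arr Q R)) := by
    intro x R Q
    refine SS hA (y := arr (arr x R) R) ?_ (ht2 x R)
    exact KK hA (S1 hA (KK hA (kC_le R Q) (arr x R))) x
  have ht' : ∀ x R P : A, t' ≤ arr x (arr P (arr (arr x R) R)) := by
    intro x R P
    refine SS hA (y := arr (arr x R) R) ?_ (ht2 x R)
    exact KK hA (kC_le (arr (arr x R) R) P) x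
  have hIm : I ∈ S := app_mem hA hS (app_mem hA hS hS.smem hS.kmem) hS.kmem
  have ht2m : t2 ∈ S :=
    app_mem hA hS (app_mem hA hS hS.smem
      (app_mem hA hS hS.kmem (app_mem hA hS hS.smem hIm))) hS.kmem
  have htm : t ∈ S :=
    app_mem hA hS (app_mem hA hS hS.smem (app_mem hA hS hS.kmem
      (app_mem hA hS hS.smem (app_mem hA hS hS.kmem hS.kmem)))) ht2m
  have ht'm : t' ∈ S :=
    app_mem hA hS (app_mem hA hS hS.smem (app_mem hA hS hS.kmem hS.kmem)) ht2m
  refine ⟨?_, ?_, ?_⟩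
  · intro a b
    have hinf : (⨅ c, arr a
        (arr (arr a (pd arr c)) (arr (arr b (pd arr c)) (pd arr c)))) ∈ S :=
      hS.up htm (le_iInf fun c => ht a (pd arr c) (arr b (pd arr c)))
    exact Ainf hS _ (fun c => ⟨_, _, rfl⟩) hinf
  · intro a b
    have hinf : (⨅ c, arr b
        (arr (arr a (pd arr c)) (arr (arr b (pd arr c)) (pd arr c)))) ∈ S :=
      hS.up ht'm (le_iInf fun c => ht' b (pd arr c) (arr a (pd arr c)))
    exact Ainf hS _ (fun c => ⟨_, _, rfl⟩) hinf
  · intro a b c hac hbc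
    -- c ⊢ ∂c
    have hcd : arr c (pd arr c) ∈ S := hS.up hS.kmem (kC_le c ⊤)
    -- ∂c ⊢ c
    have hdc : arr (pd arr c) c ∈ S := by
      have h1 : arr (pd arr c) (arr (pd arr c) c) ∈ S :=
        hS.up (refl_mem hA hS (pd arr c)) (hA.mono le_rfl (hA.mono le_top le_rfl))
      exact Dmp hS h1 (refl_mem hA hS (pd arr c))
    have haD : arr a (pd arr c) ∈ S := Dtrans hS hac hcd
    have hbD : arr b (pd arr c) ∈ S := Dtrans hS hbc hcd
    have hJP : arr (joinA arr a b)
        (arr (arr a (pd arr c)) (arr (arr b (pd arr c)) (pd arr c))) ∈ S :=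
      hS.up (refl_mem hA hS (joinA arr a b)) (hA.mono le_rfl (iInf_le _ c))
    have hJ2 : arr (joinA arr a b) (pd arr c) ∈ S :=
      Dmp hS (Dmp hS hJP (Dw hS haD _)) (Dw hS hbD _)
    exact Dtrans hS hJ2 hdc
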